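/- If H*(n) → ∞ as n → ∞, then under the Volterra equation hypotheses, lim_{n→∞} x*(n)/H*(n) = 1, where x*(n) = max_{0≤j≤n}|x(j)| and H*(n) = max_{1≤j≤n}|H(j)|. -/

import Mathlib

open Filter Finset Topology

/-- Running maximum of `g` over `{1,…,n}` (value `0` when `n = 0`). -/
noncomputable def runMax1 (g : ℕ → ℝ) (n : ℕ) : ℝ :=
  if h : 1 ≤ n then (Finset.Icc 1 n).sup' (Finset.nonempty_Icc.mpr h) g else 0

/-- Running maximum of `g` over `{0,…,n}`. -/
noncomputable def runMax0 (g : ℕ → ℝ) (n : ℕ) : ℝ :=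
  (Finset.Icc 0 n).sup' (Finset.nonempty_Icc.mpr (Nat.zero_le n)) g

/-!
Write `X n = max_{j ≤ n} |x j|` and `Hₙ = max_{1 ≤ j ≤ n} |H j|`. Since `f` is sublinear, for every
`ε > 0` there is `C` with `|f y| ≤ ε |y| + C`, so each convolution sum in the equation is at most
`K (ε X n + C)` with `K = ∑ |k j|`. Reading the equation as `x = H + …` and as `H = x - …` gives
`|X n - Hₙ| ≤ K ε X n + K C + |x 0|`; as `ε` is arbitrary and `Hₙ → ∞`, `X n - Hₙ = o(Hₙ)`.
-/

open Asymptotics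

theorem isEquivalent_of_forall_abs_sub_le {α : Type*} {l : Filter α} {u v : α → ℝ}
    (hv : Tendsto v l atTop) (h : ∀ ε > 0, ∃ C, ∀ᶠ a in l, |u a - v a| ≤ ε * u a + C) :
    u ~[l] v := by
  refine isLittleO_iff.2 fun c hc => ?_
  -- With `ε = c / (c + 4)` the bound gives `u ≤ (1 + c/4) (v + C)`, hence
  -- `|u - v| ≤ c v / 4 + (1 + c/4) C ≤ c v` as soon as `3 c v ≥ (c + 4) |C|`.
  obtain ⟨C, hC⟩ := h (c / (c + 4)) (by positivity)
  filter_upwards [hC, hv.eventually_ge_atTop ((c + 4) * |C| / (3 * c))] with a hCa hva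
  have hv0 : 0 ≤ v a := le_trans (by positivity) hva
  rw [Pi.sub_apply, Real.norm_eq_abs, Real.norm_eq_abs, abs_of_nonneg hv0]
  rw [div_le_iff₀ (by positivity)] at hva
  have hε : (c + 4) * (c / (c + 4)) = c := by field_simp
  obtain ⟨hlo, hhi⟩ := abs_le.1 hCa
  have hu : 4 * u a ≤ (c + 4) * (v a + C) := by nlinarith
  have hCabs := le_abs_self C
  rw [abs_le]
  constructor <;> nlinarith

theorem exists_abs_le_add_of_eventually_cocompact {X : Type*} [TopologicalSpace X]
    {f g : X → ℝ} (hf : Continuous f) (hg : ∀ y, 0 ≤ g y) (h : ∀ᶠ y in cocompact X, |f y| ≤ g y) :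
    ∃ C, ∀ y, |f y| ≤ g y + C := by
  obtain ⟨s, hs, hout⟩ := hasBasis_cocompact.eventually_iff.1 h
  obtain ⟨C, hC⟩ := hs.exists_bound_of_continuousOn hf.continuousOn
  refine ⟨max C 0, fun y => ?_⟩
  by_cases hy : y ∈ s
  · have hCy := hC y hy
    rw [Real.norm_eq_abs] at hCy
    linarith [hg y, le_max_left C 0]
  · linarith [hout hy, le_max_right C 0]

theorem exists_abs_le_mul_abs_add_of_tendsto_div {f : ℝ → ℝ} (hf : Continuous f)
    (hsub : Tendsto (fun y => f y / y) (cocompact ℝ) (𝓝 0)) {ε : ℝ} (hε : 0 < ε) :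
    ∃ C, ∀ y, |f y| ≤ ε * |y| + C := by
  refine exists_abs_le_add_of_eventually_cocompact hf (fun y => by positivity) ?_
  have hsmall : ∀ᶠ y in cocompact ℝ, |f y / y| < ε := by
    simpa only [Real.dist_eq, sub_zero] using Metric.tendsto_nhds.1 hsub ε hε
  filter_upwards [hsmall, (isCompact_singleton (x := (0 : ℝ))).compl_mem_cocompact] with y hy hy0
  rw [abs_div, div_lt_iff₀ (abs_pos.2 hy0)] at hy
  exact hy.le

theorem abs_sum_range_mul_le_tsum {a b : ℕ → ℝ} (ha : Summable fun j => |a j|) {m : ℕ} {B : ℝ}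
    (hb : ∀ j ≤ m, |b j| ≤ B) :
    |∑ j ∈ range (m + 1), a (m - j) * b j| ≤ (∑' j, |a j|) * B := by
  have hB : 0 ≤ B := (abs_nonneg _).trans (hb 0 m.zero_le)
  calc |∑ j ∈ range (m + 1), a (m - j) * b j|
      ≤ ∑ j ∈ range (m + 1), |a (m - j)| * B := by
        refine (abs_sum_le_sum_abs _ _).trans (sum_le_sum fun j hj => ?_)
        rw [abs_mul]
        exact mul_le_mul_of_nonneg_left (hb j (Nat.lt_succ_iff.1 (mem_range.1 hj))) (abs_nonneg _)
    _ = (∑ j ∈ range (m + 1), |a j|) * B := by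
        rw [← sum_mul, ← sum_range_reflect (fun j => |a j|) (m + 1)]
        simp only [add_tsub_cancel_right]
    _ ≤ (∑' j, |a j|) * B :=
        mul_le_mul_of_nonneg_right (ha.sum_le_tsum _ fun j _ => abs_nonneg _) hB

section RunningMax

variable {g : ℕ → ℝ} {n j : ℕ} {c : ℝ}

theorem le_runMax0 (h : j ≤ n) : g j ≤ runMax0 g n :=
  le_sup' g (mem_Icc.2 ⟨j.zero_le, h⟩)

theorem runMax0_le (h : ∀ j ≤ n, g j ≤ c) : runMax0 g n ≤ c :=
  sup'_le _ _ fun j hj => h j (mem_Icc.1 hj).2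

theorem le_runMax1 (h1 : 1 ≤ j) (h2 : j ≤ n) : g j ≤ runMax1 g n := by
  rw [runMax1, dif_pos (h1.trans h2)]
  exact le_sup' g (mem_Icc.2 ⟨h1, h2⟩)

theorem runMax1_le (hn : 1 ≤ n) (h : ∀ j, 1 ≤ j → j ≤ n → g j ≤ c) : runMax1 g n ≤ c := by
  rw [runMax1, dif_pos hn]
  exact sup'_le _ _ fun j hj => h j (mem_Icc.1 hj).1 (mem_Icc.1 hj).2

theorem runMax1_nonneg (hg : 0 ≤ g) (hn : 1 ≤ n) : 0 ≤ runMax1 g n :=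
  (hg 1).trans (le_runMax1 le_rfl hn)

end RunningMax

section Volterra

variable {f : ℝ → ℝ} {k H x : ℕ → ℝ} {ε C : ℝ} {m n : ℕ}

theorem abs_volterraSum_le (hk : Summable fun j => |k j|) (hε : 0 ≤ ε)
    (hC : ∀ y, |f y| ≤ ε * |y| + C) (hmn : m ≤ n) :
    |∑ j ∈ range (m + 1), k (m - j) * f (x j)| ≤
      (∑' j, |k j|) * (ε * runMax0 (fun j => |x j|) n + C) :=
  abs_sum_range_mul_le_tsum hk fun j hj =>
    (hC _).trans (by gcongr; exact le_runMax0 (g := fun j => |x j|) (hj.trans hmn))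

theorem runMax0_le_runMax1_add (hk : Summable fun j => |k j|)
    (hx : ∀ n : ℕ, x (n + 1) = H (n + 1) + ∑ j ∈ range (n + 1), k (n - j) * f (x j))
    (hε : 0 ≤ ε) (hC : ∀ y, |f y| ≤ ε * |y| + C) (hn : 1 ≤ n) :
    runMax0 (fun j => |x j|) n ≤
      runMax1 (fun j => |H j|) n + (∑' j, |k j|) * (ε * runMax0 (fun j => |x j|) n + C)
        + |x 0| := by
  have hH := runMax1_nonneg (g := fun j => |H j|) (fun j => abs_nonneg _) hn
  have hsum0 := abs_volterraSum_le (x := x) hk hε hC n.zero_le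
  refine runMax0_le fun j hj => ?_
  rcases j with _ | m
  · linarith [(abs_nonneg _).trans hsum0]
  · have hHm := le_runMax1 (g := fun j => |H j|) m.succ_pos hj
    have hsum := abs_volterraSum_le (x := x) hk hε hC (m.le_succ.trans hj)
    have hxm : |x (m + 1)| ≤ |H (m + 1)| + |∑ j ∈ range (m + 1), k (m - j) * f (x j)| := by
      rw [hx m]
      exact abs_add_le _ _
    linarith [abs_nonneg (x 0)]

theorem runMax1_le_runMax0_add (hk : Summable fun j => |k j|)
    (hx : ∀ n : ℕ, x (n + 1) = H (n + 1) + ∑ j ∈ range (n + 1), k (n - j) * f (x j))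
    (hε : 0 ≤ ε) (hC : ∀ y, |f y| ≤ ε * |y| + C) (hn : 1 ≤ n) :
    runMax1 (fun j => |H j|) n ≤
      runMax0 (fun j => |x j|) n + (∑' j, |k j|) * (ε * runMax0 (fun j => |x j|) n + C) := by
  refine runMax1_le hn fun j h1 hj => ?_
  obtain ⟨m, rfl⟩ := Nat.exists_eq_add_of_le' h1
  have hxm := le_runMax0 (g := fun j => |x j|) hj
  have hsum := abs_volterraSum_le (x := x) hk hε hC (m.le_succ.trans hj)
  have hHm : |H (m + 1)| ≤ |x (m + 1)| + |∑ j ∈ range (m + 1), k (m - j) * f (x j)| :=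
    calc |H (m + 1)| = |x (m + 1) - ∑ j ∈ range (m + 1), k (m - j) * f (x j)| := by
          rw [hx m, add_sub_cancel_right]
      _ ≤ _ := abs_sub _ _
  linarith

end Volterra

theorem stmt4_general
(f : ℝ → ℝ) (k H x : ℕ → ℝ)
    (hf : Continuous f)
    (hsub : Filter.Tendsto (fun y => f y / y) (Filter.cocompact ℝ) (nhds 0))
    (hk : Summable (fun j => |k j|))
    (hx : ∀ n : ℕ, x (n + 1) = H (n + 1) + ∑ j ∈ Finset.range (n + 1), k (n - j) * f (x j))
    (hH : Filter.Tendsto (fun n => runMax1 (fun j => |H j|) n) Filter.atTop Filter.atTop) :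
    Filter.Tendsto
      (fun n => runMax0 (fun j => |x j|) n / runMax1 (fun j => |H j|) n)
      Filter.atTop (nhds 1) := by
  set K := ∑' j, |k j| with hKdef
  have hK : 0 ≤ K := tsum_nonneg fun j => abs_nonneg _
  refine (isEquivalent_iff_tendsto_one ((hH.eventually_gt_atTop 0).mono fun _ h => h.ne')).1
    (isEquivalent_of_forall_abs_sub_le hH fun ε hε => ?_)
  obtain ⟨C, hC⟩ := exists_abs_le_mul_abs_add_of_tendsto_div hf hsub
    (show 0 < ε / (K + 1) by positivity)
  refine ⟨K * C + |x 0|, (eventually_ge_atTop 1).mono fun n hn => ?_⟩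
  have hX : 0 ≤ runMax0 (fun j => |x j|) n :=
    (abs_nonneg _).trans (le_runMax0 (g := fun j => |x j|) n.zero_le)
  have hKε : K * (ε / (K + 1)) ≤ ε := by
    rw [mul_div_left_comm]
    exact mul_le_of_le_one_right hε.le ((div_le_one (by positivity)).2 (by linarith))
  have hup := runMax0_le_runMax1_add hk hx (by positivity) hC hn
  have hdown := runMax1_le_runMax0_add hk hx (by positivity) hC hn
  rw [← hKdef] at hup hdown
  have hKεX := mul_le_mul_of_nonneg_right hKε hX
  rw [abs_sub_le_iff]
  constructor <;> linarith [abs_nonneg (x 0)]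

theorem stmt4
(f : ℝ → ℝ) (k H x : ℕ → ℝ) (ξ : ℝ)
    (hf : Continuous f)
    (hsub : Filter.Tendsto (fun y => f y / y) (Filter.cocompact ℝ) (nhds 0))
    (hk : Summable (fun j => |k j|))
    (hx0 : x 0 = ξ)
    (hx : ∀ n : ℕ, x (n + 1) = H (n + 1) + ∑ j ∈ Finset.range (n + 1), k (n - j) * f (x j))
    (hH : Filter.Tendsto (fun n => runMax1 (fun j => |H j|) n) Filter.atTop Filter.atTop) :
    Filter.Tendsto
      (fun n => runMax0 (fun j => |x j|) n / runMax1 (fun j => |H j|) n)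
      Filter.atTop (nhds 1) :=
  stmt4_general f k H x hf hsub hk hx hH
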